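/- For all L ≥ L₀ > 0 there is a constant C (depending only on L₀) such that for every L²-normalized ψ ∈ H¹(𝕋³_L), W_L(ψ) ≤ T_L(ψ)/2 + C; consequently E_L(ψ) ≥ T_L(ψ)/2 − C, and the Pekar energy e_L = inf E_L satisfies e_L ≥ −C uniformly in L ≥ L₀. -/

import Mathlib

/-!
Write `rhoCoef L ψ k = L^(-3/2) A(k)`, with `A` the autocorrelation of the Fourier coefficients
of `ψ`. Cauchy–Schwarz gives `|A(k)| ≤ 1`, and splitting `|k| ≤ |j| + |j + k|` inside the sum
gives `|k| |A(k)| ≤ 2 √T`, so the `k`-th term of `W` is at most `min (1/|k|², 4T/|k|⁴) / L³`.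
At most `26 n²` lattice points have sup-norm `n`; using the first bound for `n ≤ L √T` and the
second beyond, each part is `O(√T)` uniformly in `L`, and in fact `W ≤ √T ≤ T/2 + 1/2`.
-/

open scoped Real BigOperators

abbrev Lat3 := Fin 3 → ℤ

noncomputable def knorm (L : ℝ) (k : Lat3) : ℝ :=
  (2 * Real.pi / L) * Real.sqrt (∑ i, ((k i : ℝ)) ^ 2)

noncomputable def rhoCoef (L : ℝ) (ψ : Lat3 → ℂ) (k : Lat3) : ℂ :=
  ((L ^ (-(3:ℝ)/2) : ℝ) : ℂ) * ∑' j : Lat3, (starRingEnd ℂ) (ψ j) * ψ (j + k)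

noncomputable def TL (L : ℝ) (ψ : Lat3 → ℂ) : ℝ :=
  ∑' k : Lat3, knorm L k ^ 2 * ‖ψ k‖ ^ 2

noncomputable def WL (L : ℝ) (ψ : Lat3 → ℂ) : ℝ :=
  ∑' k : Lat3, if k = 0 then 0 else ‖rhoCoef L ψ k‖ ^ 2 / knorm L k ^ 2

noncomputable def EL (L : ℝ) (ψ : Lat3 → ℂ) : ℝ := TL L ψ - WL L ψ

open Finset

section Autocorrelation

variable {G : Type*} [AddGroup G]

theorem summable_and_tsum_mul_shift_le {u v : G → ℝ} (hu : ∀ j, 0 ≤ u j) (hv : ∀ j, 0 ≤ v j)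
    (hu2 : Summable fun j => u j ^ 2) (hv2 : Summable fun j => v j ^ 2) (k : G) :
    (Summable fun j => u j * v (j + k)) ∧
      ∑' j, u j * v (j + k) ≤ √(∑' j, u j ^ 2) * √(∑' j, v j ^ 2) := by
  have hvk : Summable fun j => v (j + k) ^ 2 :=
    (Equiv.addRight k).summable_iff (f := fun j => v j ^ 2) |>.mpr hv2
  have hvk_eq : ∑' j, v (j + k) ^ 2 = ∑' j, v j ^ 2 :=
    (Equiv.addRight k).tsum_eq fun j => v j ^ 2
  have h := Real.summable_and_inner_le_Lp_mul_Lq_tsum_of_nonneg Real.HolderConjugate.two_two hu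
    (fun j => hv (j + k)) (by simpa only [Real.rpow_two] using hu2)
    (by simpa only [Real.rpow_two] using hvk)
  simpa only [Real.rpow_two, hvk_eq, ← Real.sqrt_eq_rpow] using h

noncomputable def autocorr (ψ : G → ℂ) (k : G) : ℂ := ∑' j, starRingEnd ℂ (ψ j) * ψ (j + k)

variable {ψ : G → ℂ}

theorem norm_autocorr_le_tsum (hψ : Summable fun j => ‖ψ j‖ ^ 2) (k : G) :
    ‖autocorr ψ k‖ ≤ ∑' j, ‖ψ j‖ * ‖ψ (j + k)‖ := by
  have hnorm : ∀ j, ‖starRingEnd ℂ (ψ j) * ψ (j + k)‖ = ‖ψ j‖ * ‖ψ (j + k)‖ := fun j => by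
    rw [norm_mul, RCLike.norm_conj]
  simp only [autocorr, ← hnorm]
  refine norm_tsum_le_tsum_norm ?_
  simpa only [hnorm] using
    (summable_and_tsum_mul_shift_le (fun _ => norm_nonneg _) (fun _ => norm_nonneg _) hψ hψ k).1

theorem norm_autocorr_le (hψ : Summable fun j => ‖ψ j‖ ^ 2) (k : G) :
    ‖autocorr ψ k‖ ≤ ∑' j, ‖ψ j‖ ^ 2 := by
  have h := (summable_and_tsum_mul_shift_le (fun _ => norm_nonneg _) (fun _ => norm_nonneg _)
    hψ hψ k).2
  rw [Real.mul_self_sqrt (tsum_nonneg fun _ => sq_nonneg _)] at h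
  exact (norm_autocorr_le_tsum hψ k).trans h

theorem mul_norm_autocorr_le (κ : AddGroupSeminorm G) (hψ : Summable fun j => ‖ψ j‖ ^ 2)
    (hκψ : Summable fun j => κ j ^ 2 * ‖ψ j‖ ^ 2) (k : G) :
    κ k * ‖autocorr ψ k‖ ≤ 2 * √(∑' j, κ j ^ 2 * ‖ψ j‖ ^ 2) * √(∑' j, ‖ψ j‖ ^ 2) := by
  have hκψ' : Summable fun j => (κ j * ‖ψ j‖) ^ 2 := by simpa only [mul_pow] using hκψ
  have h₁ := summable_and_tsum_mul_shift_le (fun j => mul_nonneg (apply_nonneg κ j)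
    (norm_nonneg (ψ j))) (fun _ => norm_nonneg _) hκψ' hψ k
  have h₂ := summable_and_tsum_mul_shift_le (fun _ => norm_nonneg _)
    (fun j => mul_nonneg (apply_nonneg κ j) (norm_nonneg (ψ j))) hψ hκψ' k
  simp only [mul_pow] at h₁ h₂
  have hκ : ∀ j, κ k ≤ κ j + κ (j + k) := fun j => by
    simpa only [map_neg_eq_map, neg_add_cancel_left] using map_add_le_add κ (-j) (j + k)
  calc κ k * ‖autocorr ψ k‖
      ≤ ∑' j, κ k * (‖ψ j‖ * ‖ψ (j + k)‖) := by
        rw [tsum_mul_left]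
        exact mul_le_mul_of_nonneg_left (norm_autocorr_le_tsum hψ k) (apply_nonneg κ k)
    _ ≤ ∑' j, (κ j * ‖ψ j‖ * ‖ψ (j + k)‖ + ‖ψ j‖ * (κ (j + k) * ‖ψ (j + k)‖)) := by
        refine Summable.tsum_le_tsum (fun j => ?_) ?_ (h₁.1.add h₂.1)
        · have := mul_le_mul_of_nonneg_right (hκ j)
            (mul_nonneg (norm_nonneg (ψ j)) (norm_nonneg (ψ (j + k))))
          linarith
        · exact (summable_and_tsum_mul_shift_le (fun _ => norm_nonneg _)
            (fun _ => norm_nonneg _) hψ hψ k).1.mul_left _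
    _ = ∑' j, κ j * ‖ψ j‖ * ‖ψ (j + k)‖ + ∑' j, ‖ψ j‖ * (κ (j + k) * ‖ψ (j + k)‖) :=
        h₁.1.tsum_add h₂.1
    _ ≤ 2 * √(∑' j, κ j ^ 2 * ‖ψ j‖ ^ 2) * √(∑' j, ‖ψ j‖ ^ 2) := by
        linarith [h₁.2, h₂.2]

end Autocorrelation

theorem sqrt_sum_sq_add_le {d : ℕ} (x y : Fin d → ℝ) :
    √(∑ i, (x i + y i) ^ 2) ≤ √(∑ i, x i ^ 2) + √(∑ i, y i ^ 2) := by
  have h : ∀ z : Fin d → ℝ, √(∑ i, z i ^ 2) = ‖WithLp.toLp 2 z‖ := fun z => by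
    simp only [EuclideanSpace.norm_eq, Real.norm_eq_abs, sq_abs]
  calc √(∑ i, (x i + y i) ^ 2) = ‖WithLp.toLp 2 x + WithLp.toLp 2 y‖ := h (x + y)
    _ ≤ _ := by rw [h, h]; exact norm_add_le _ _

noncomputable def cube (d n : ℕ) : Finset (Fin d → ℤ) := Icc (-(n : Fin d → ℤ)) n

theorem mem_cube {d n : ℕ} {k : Fin d → ℤ} : k ∈ cube d n ↔ ∀ i, |k i| ≤ n := by
  simp only [cube, mem_Icc, Pi.le_def, ← forall_and, abs_le, Pi.neg_apply, Pi.natCast_apply]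

theorem card_cube (d n : ℕ) : #(cube d n) = (2 * n + 1) ^ d := by
  simp only [cube, Pi.card_Icc, Pi.neg_apply, Pi.natCast_apply, Int.card_Icc, prod_const,
    card_univ, Fintype.card_fin]
  congr 1
  omega

theorem cube_mono (d : ℕ) : Monotone (cube d) := fun m n hmn k hk =>
  mem_cube.2 fun i => (mem_cube.1 hk i).trans (by exact_mod_cast hmn)

theorem tendsto_cube (d : ℕ) : Filter.Tendsto (cube d) Filter.atTop Filter.atTop :=
  Filter.tendsto_atTop_finset_of_monotone (cube_mono d) fun k =>
    ⟨∑ i, (k i).natAbs, mem_cube.2 fun i => by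
      rw [Int.abs_eq_natAbs]
      exact_mod_cast single_le_sum (f := fun i => (k i).natAbs) (fun _ _ => Nat.zero_le _)
        (mem_univ i)⟩

theorem sq_le_sum_sq_of_not_mem_cube {d n : ℕ} {k : Fin d → ℤ} (hk : k ∉ cube d n) :
    ((n + 1 : ℕ) : ℝ) ^ 2 ≤ ∑ i, (k i : ℝ) ^ 2 := by
  obtain ⟨i, hi⟩ := not_forall.1 (mt mem_cube.2 hk)
  have hi' : ((n + 1 : ℕ) : ℝ) ≤ |(k i : ℝ)| := by exact_mod_cast (by omega : (n : ℤ) + 1 ≤ |k i|)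
  calc ((n + 1 : ℕ) : ℝ) ^ 2 ≤ (k i : ℝ) ^ 2 := by
        simpa only [sq_abs] using pow_le_pow_left₀ (by positivity) hi' 2
    _ ≤ ∑ i, (k i : ℝ) ^ 2 :=
        single_le_sum (f := fun i => (k i : ℝ) ^ 2) (fun _ _ => sq_nonneg _)
          (mem_univ i)

theorem sum_cube_le {d : ℕ} {f : (Fin d → ℤ) → ℝ} {g : ℕ → ℝ} (hf0 : f 0 ≤ 0)
    (hf : ∀ (n : ℕ) k, 0 < n → (n : ℝ) ^ 2 ≤ ∑ i, (k i : ℝ) ^ 2 → f k ≤ g n) (M : ℕ) :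
    ∑ k ∈ cube d M, f k
      ≤ ∑ n ∈ Ioc 0 M, (((2 * n + 1) ^ d - (2 * n - 1) ^ d : ℕ) : ℝ) * g n := by
  induction M with
  | zero => simpa [cube] using hf0
  | succ M ih =>
    have hsub := cube_mono d M.le_succ
    have hshell : ∑ k ∈ cube d (M + 1) \ cube d M, f k
        ≤ (((2 * (M + 1) + 1) ^ d - (2 * (M + 1) - 1) ^ d : ℕ) : ℝ) * g (M + 1) := by
      have hcard : #(cube d (M + 1) \ cube d M)
          = (2 * (M + 1) + 1) ^ d - (2 * (M + 1) - 1) ^ d := by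
        rw [card_sdiff_of_subset hsub, card_cube, card_cube]
        congr 2
      rw [← hcard, ← nsmul_eq_mul]
      refine sum_le_card_nsmul _ _ _ fun k hk => hf _ _ M.succ_pos ?_
      exact sq_le_sum_sq_of_not_mem_cube (mem_sdiff.1 hk).2
    rw [← sum_sdiff hsub, sum_Ioc_succ_top (Nat.zero_le M)]
    linarith

theorem sum_Ioc_min_le {a b : ℝ} (ha : 0 ≤ a) (hb : 0 ≤ b) (N M : ℕ) :
    ∑ n ∈ Ioc 0 M, min a (b / (n : ℝ) ^ 2) ≤ N * a + 2 * b / (N + 1) := by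
  rw [← sum_filter_add_sum_filter_not _ (· ≤ N)]
  gcongr
  · calc ∑ n ∈ (Ioc 0 M).filter (· ≤ N), min a (b / (n : ℝ) ^ 2)
          ≤ ∑ n ∈ (Ioc 0 M).filter (· ≤ N), a := sum_le_sum fun _ _ => min_le_left _ _
      _ ≤ #(Ioc 0 N) * a := by
          rw [sum_const, nsmul_eq_mul]
          gcongr
          intro n hn
          simp only [mem_filter, mem_Ioc] at hn ⊢
          omega
      _ = N * a := by simp
  · calc ∑ n ∈ (Ioc 0 M).filter (¬ · ≤ N), min a (b / (n : ℝ) ^ 2)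
          ≤ ∑ n ∈ (Ioc 0 M).filter (¬ · ≤ N), b * ((n : ℝ) ^ 2)⁻¹ :=
            sum_le_sum fun _ _ => (min_le_right _ _).trans_eq (div_eq_mul_inv _ _)
      _ ≤ ∑ n ∈ Ioo N (M + 1), b * ((n : ℝ) ^ 2)⁻¹ := by
          refine sum_le_sum_of_subset_of_nonneg (fun n hn => ?_) fun _ _ _ => by positivity
          simp only [mem_filter, mem_Ioc, mem_Ioo] at hn ⊢
          omega
      _ ≤ b * (2 / (N + 1)) := by
          rw [← mul_sum]
          exact mul_le_mul_of_nonneg_left (sum_Ioo_inv_sq_le N (M + 1)) hb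
      _ = 2 * b / (N + 1) := by ring

theorem card_shell_le {n : ℕ} (hn : 0 < n) : (2 * n + 1) ^ 3 - (2 * n - 1) ^ 3 ≤ 26 * n ^ 2 := by
  obtain ⟨m, rfl⟩ : ∃ m, n = m + 1 := ⟨n - 1, by omega⟩
  rw [show 2 * (m + 1) - 1 = 2 * m + 1 by omega]
  refine Nat.sub_le_iff_le_add.2 ?_
  ring_nf
  nlinarith

noncomputable def knormSeminorm {L : ℝ} (hL : 0 ≤ L) : AddGroupSeminorm Lat3 where
  toFun := knorm L
  map_zero' := by simp [knorm]
  add_le' x y := by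
    simp only [knorm, ← mul_add]
    gcongr
    simpa only [Pi.add_apply, Int.cast_add] using
      sqrt_sum_sq_add_le (fun i => (x i : ℝ)) (fun i => (y i : ℝ))
  neg' x := by simp [knorm]

theorem mul_le_knorm {L : ℝ} (hL : 0 < L) {k : Lat3} {n : ℕ}
    (hn : (n : ℝ) ^ 2 ≤ ∑ i, (k i : ℝ) ^ 2) : 2 * π / L * n ≤ knorm L k :=
  mul_le_mul_of_nonneg_left (Real.le_sqrt_of_sq_le hn) (by positivity)

theorem norm_rhoCoef_sq {L : ℝ} (hL : 0 < L) (ψ : Lat3 → ℂ) (k : Lat3) :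
    ‖rhoCoef L ψ k‖ ^ 2 = ‖autocorr ψ k‖ ^ 2 / L ^ 3 := by
  have hP : (L ^ (-(3 : ℝ) / 2)) ^ 2 = (L ^ 3)⁻¹ := by
    rw [← Real.rpow_natCast, ← Real.rpow_mul hL.le, ← Real.rpow_natCast, ← Real.rpow_neg hL.le]
    norm_num
  rw [rhoCoef, norm_mul, Complex.norm_real, Real.norm_eq_abs, mul_pow, sq_abs, hP, autocorr]
  ring

theorem TL_nonneg (L : ℝ) (ψ : Lat3 → ℂ) : 0 ≤ TL L ψ :=
  tsum_nonneg fun _ => by positivity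

theorem rhoCoef_sq_div_knorm_sq_le {L : ℝ} (hL : 0 < L) {ψ : Lat3 → ℂ}
    (hψ : Summable fun j => ‖ψ j‖ ^ 2) (hψ1 : ∑' j, ‖ψ j‖ ^ 2 = 1)
    (hT : Summable fun j => knorm L j ^ 2 * ‖ψ j‖ ^ 2) {k : Lat3} {n : ℕ} (hn : 0 < n)
    (hnk : (n : ℝ) ^ 2 ≤ ∑ i, (k i : ℝ) ^ 2) :
    ‖rhoCoef L ψ k‖ ^ 2 / knorm L k ^ 2
      ≤ min (1 / (4 * π ^ 2 * L)) (TL L ψ * L / (4 * π ^ 4) / n ^ 2) / n ^ 2 := by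
  set x := ‖autocorr ψ k‖
  set κ := knorm L k
  have hc : 0 < 2 * π / L * n := by positivity
  have hcκ : 2 * π / L * n ≤ κ := mul_le_knorm hL hnk
  have hx : 0 ≤ x := norm_nonneg _
  have hx1 : x ≤ 1 := hψ1 ▸ norm_autocorr_le hψ k
  have hκ : 0 < κ := hc.trans_le hcκ
  have hκx : κ * x ≤ 2 * √(TL L ψ) := by
    have h := mul_norm_autocorr_le (knormSeminorm hL.le) hψ hT k
    rw [hψ1, Real.sqrt_one, mul_one] at h
    exact h
  rw [norm_rhoCoef_sq hL, ← min_div_div_right (by positivity)]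
  refine le_min ?_ ?_
  · calc x ^ 2 / L ^ 3 / κ ^ 2 ≤ 1 / L ^ 3 / (2 * π / L * n) ^ 2 := by
          gcongr
          exact pow_le_one₀ hx hx1
      _ = 1 / (4 * π ^ 2 * L) / n ^ 2 := by field_simp; ring
  · calc x ^ 2 / L ^ 3 / κ ^ 2 = (κ * x) ^ 2 / L ^ 3 / κ ^ 4 := by
          field_simp
      _ ≤ (2 * √(TL L ψ)) ^ 2 / L ^ 3 / (2 * π / L * n) ^ 4 := by
          gcongr
      _ = TL L ψ * L / (4 * π ^ 4) / n ^ 2 / n ^ 2 := by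
          rw [mul_pow, Real.sq_sqrt (TL_nonneg L ψ)]
          field_simp
          ring

theorem cutoff_estimate {L t : ℝ} (hL : 0 < L) (ht : 0 ≤ t) :
    26 * (⌊L * t⌋₊ * (1 / (4 * π ^ 2 * L)) + 2 * (t ^ 2 * L / (4 * π ^ 4)) / (⌊L * t⌋₊ + 1))
      ≤ t := by
  set N : ℝ := (⌊L * t⌋₊ : ℝ)
  have hN : N ≤ L * t := Nat.floor_le (by positivity)
  have hN1 : L * t ≤ N + 1 := (Nat.lt_floor_add_one _).le
  have hπ : 9 ≤ π ^ 2 := by nlinarith [Real.pi_gt_three]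
  have hhead : N * (1 / (4 * π ^ 2 * L)) ≤ t / (4 * π ^ 2) := by
    rw [mul_one_div, div_le_div_iff₀ (by positivity) (by positivity)]
    nlinarith
  have htail : 2 * (t ^ 2 * L / (4 * π ^ 4)) / (N + 1) ≤ t / (2 * π ^ 4) := by
    rw [div_le_div_iff₀ (by positivity) (by positivity)]
    have h : 2 * (t ^ 2 * L / (4 * π ^ 4)) * (2 * π ^ 4) = t * (L * t) := by field_simp; ring
    nlinarith [mul_le_mul_of_nonneg_left hN1 ht]
  have h36 : 36 ≤ 4 * π ^ 2 := by linarith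
  have h162 : 162 ≤ 2 * π ^ 4 := by nlinarith
  calc _ ≤ 26 * (t / (4 * π ^ 2) + t / (2 * π ^ 4)) := by gcongr
    _ ≤ 26 * (t / 36 + t / 162) := by gcongr
    _ ≤ t := by linarith

theorem WL_le_sqrt_TL {L : ℝ} (hL : 0 < L) {ψ : Lat3 → ℂ}
    (hψ : Summable fun j => ‖ψ j‖ ^ 2) (hψ1 : ∑' j, ‖ψ j‖ ^ 2 = 1)
    (hT : Summable fun j => knorm L j ^ 2 * ‖ψ j‖ ^ 2)
    (hW : Summable fun k => if k = 0 then (0 : ℝ) else ‖rhoCoef L ψ k‖ ^ 2 / knorm L k ^ 2) :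
    WL L ψ ≤ √(TL L ψ) := by
  set f : Lat3 → ℝ := fun k => if k = 0 then 0 else ‖rhoCoef L ψ k‖ ^ 2 / knorm L k ^ 2
  set a := 1 / (4 * π ^ 2 * L)
  set b := TL L ψ * L / (4 * π ^ 4)
  have ha : 0 ≤ a := by positivity
  have hb : 0 ≤ b := by positivity [TL_nonneg L ψ]
  have hg : ∀ n : ℕ, 0 ≤ min a (b / n ^ 2) / n ^ 2 := fun n =>
    div_nonneg (le_min ha (by positivity)) (by positivity)
  have hsum : ∀ M, ∑ k ∈ cube 3 M, f k ≤ √(TL L ψ) := fun M =>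
    calc _ ≤ ∑ n ∈ Ioc 0 M, (((2 * n + 1) ^ 3 - (2 * n - 1) ^ 3 : ℕ) : ℝ)
          * (min a (b / n ^ 2) / n ^ 2) := by
          refine sum_cube_le (f := f) (by simp [f]) (fun n k hn hnk => ?_) M
          simp only [f]
          split_ifs
          · exact hg n
          · exact rhoCoef_sq_div_knorm_sq_le hL hψ hψ1 hT hn hnk
      _ ≤ ∑ n ∈ Ioc 0 M, 26 * min a (b / (n : ℝ) ^ 2) := by
          refine sum_le_sum fun n hn => ?_
          have hn : 0 < n := (mem_Ioc.1 hn).1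
          calc _ ≤ ((26 * n ^ 2 : ℕ) : ℝ) * (min a (b / n ^ 2) / n ^ 2) := by
                exact mul_le_mul_of_nonneg_right (by exact_mod_cast card_shell_le hn) (hg n)
            _ = _ := by push_cast; field_simp
      _ ≤ 26 * (⌊L * √(TL L ψ)⌋₊ * a + 2 * b / (⌊L * √(TL L ψ)⌋₊ + 1)) := by
          rw [← mul_sum]
          gcongr
          exact sum_Ioc_min_le ha hb _ _
      _ ≤ √(TL L ψ) := by
          have := cutoff_estimate hL (Real.sqrt_nonneg (TL L ψ))
          rwa [Real.sq_sqrt (TL_nonneg L ψ)] at this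
  exact le_of_tendsto' (hW.hasSum.comp (tendsto_cube 3)) hsum

/-- For every `L₀ > 0` there is a constant `C` (depending only on `L₀`) such that for all
`L ≥ L₀` and all normalized `ψ ∈ H¹(𝕋³_L)`: `W_L(ψ) ≤ T_L(ψ)/2 + C`, hence
`E_L(ψ) ≥ T_L(ψ)/2 − C` and `E_L(ψ) ≥ −C`; in particular the Pekar energy
`e_L = inf E_L ≥ −C` uniformly in `L ≥ L₀`. -/
theorem WL_le_half_TL_add_const :
    ∀ L₀ : ℝ, 0 < L₀ → ∃ C : ℝ, 0 < C ∧ ∀ L : ℝ, L₀ ≤ L →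
      ∀ ψ : Lat3 → ℂ,
        Summable (fun j : Lat3 => ‖ψ j‖ ^ 2) →
        (∑' j : Lat3, ‖ψ j‖ ^ 2) = 1 →
        Summable (fun k : Lat3 => knorm L k ^ 2 * ‖ψ k‖ ^ 2) →
        (∀ k : Lat3, Summable (fun j : Lat3 => (starRingEnd ℂ) (ψ j) * ψ (j + k))) →
        Summable (fun k : Lat3 =>
          if k = 0 then (0:ℝ) else ‖rhoCoef L ψ k‖ ^ 2 / knorm L k ^ 2) →
        WL L ψ ≤ TL L ψ / 2 + C ∧
        EL L ψ ≥ TL L ψ / 2 - C ∧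
        EL L ψ ≥ -C := by
  intro L₀ hL₀
  refine ⟨1 / 2, one_half_pos, fun L hL ψ hψ hψ1 hT _ hW => ?_⟩
  have hWT := WL_le_sqrt_TL (hL₀.trans_le hL) hψ hψ1 hT hW
  have hT0 := TL_nonneg L ψ
  have hsqrt : √(TL L ψ) ≤ TL L ψ / 2 + 1 / 2 := by
    nlinarith [Real.sq_sqrt hT0, sq_nonneg (√(TL L ψ) - 1)]
  refine ⟨by linarith, ?_, ?_⟩ <;> rw [EL] <;> linarith
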